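/- Fix c > 0 and let e_n denote the n-th standard basis vector of ℓ². The curve αⁿ : [0,1] → 𝓗, αⁿ(t) = (c(1/2 − t²/2)e_n, c(t−1)e_n, c²(1/6 + t³/6 − t²/2 + t/2)), is a smooth horizontal curve from ((c/2)e_n, −c e_n, c²/6) to (0, 0, c²/3); moreover ‖α̇ⁿ₁(t)‖_η² = t²c²/n and ‖α̇ⁿ₂(t)‖_η² = c²/n for all t, hence its g-length satisfies ℓ_g(αⁿ) ≤ √2 c/√n, which tends to 0 as n → ∞. -/

import Mathlib

open scoped RealInnerProductSpace
open Real

noncomputable section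

abbrev l2 : Type := lp (fun _ : ℕ => ℝ) 2

abbrev Hei : Type := l2 × l2 × ℝ

/-- The group operation of the infinite dimensional Heisenberg group. -/
def hMul (p q : Hei) : Hei :=
  (p.1 + q.1, p.2.1 + q.2.1, p.2.2 + q.2.2 + ⟪p.1, q.2.1⟫ - ⟪p.2.1, q.1⟫)

/-- The square of the weak norm `‖u‖_η`. -/
def etaSq (u : l2) : ℝ := ∑' k : ℕ, (u k)^2 / ((k : ℝ) + 1)

/-- The square of the weak Riemannian norm `‖v‖_{σ,p}`. -/
def sigmaSq (p v : Hei) : ℝ :=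
  etaSq v.1 + etaSq v.2.1 + (v.2.2 - ⟪p.1, v.2.1⟫ + ⟪p.2.1, v.1⟫)^2

def PiecewiseC1 (γ : ℝ → Hei) : Prop :=
  ContinuousOn γ (Set.Icc 0 1) ∧
  ∃ S : Finset ℝ, ∀ t ∈ Set.Icc (0:ℝ) 1, t ∉ S →
    DifferentiableAt ℝ γ t ∧ ContinuousAt (deriv γ) t

def Horizontal (γ : ℝ → Hei) : Prop :=
  ∀ t ∈ Set.Icc (0:ℝ) 1, DifferentiableAt ℝ γ t →
    deriv (fun s => (γ s).2.2) t
      = ⟪(γ t).1, deriv (fun s => (γ s).2.1) t⟫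
        - ⟪(γ t).2.1, deriv (fun s => (γ s).1) t⟫

def lenSigma (γ : ℝ → Hei) : ℝ :=
  ∫ t in (0:ℝ)..1, Real.sqrt (sigmaSq (γ t) (deriv γ t))

def lenG (γ : ℝ → Hei) : ℝ :=
  ∫ t in (0:ℝ)..1,
    Real.sqrt (etaSq (deriv (fun s => (γ s).1) t) + etaSq (deriv (fun s => (γ s).2.1) t))

def dSigma (p q : Hei) : ℝ :=
  sInf {L | ∃ γ : ℝ → Hei, PiecewiseC1 γ ∧ γ 0 = p ∧ γ 1 = q ∧ lenSigma γ = L}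

def rho (p q : Hei) : ℝ :=
  sInf {L | ∃ γ : ℝ → Hei, PiecewiseC1 γ ∧ Horizontal γ ∧ γ 0 = p ∧ γ 1 = q ∧ lenG γ = L}

def sigma0 (v w : Hei) : ℝ :=
  (∑' k : ℕ, ((v.1 k) * (w.1 k) + (v.2.1 k) * (w.2.1 k)) / ((k : ℝ) + 1)) + v.2.2 * w.2.2

def bracket (X Y : Hei) : Hei := (0, 0, 2 * (⟪X.1, Y.2.1⟫ - ⟪X.2.1, Y.1⟫))

/-- `eVec n` is the `(n+1)`-th standard basis vector of `ℓ²`. -/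
def eVec (n : ℕ) : l2 := lp.single 2 n 1

def e3 : Hei := (0, 0, 1)

lemma etaSq_smul_eVec (a : ℝ) (m : ℕ) : etaSq (a • eVec m) = a^2 / ((m : ℝ) + 1) := by
  unfold etaSq
  have hcoe : ∀ k, (a • eVec m : l2) k = a * (eVec m k) := by
    intro k; rw [lp.coeFn_smul]; rfl
  rw [tsum_eq_single m]
  · rw [hcoe, eVec, lp.single_apply_self]; ring_nf
  · intro k hk
    rw [hcoe, eVec, lp.single_apply_ne _ _ _ hk]
    simp

lemma inner_smul_eVec (a b : ℝ) (m : ℕ) : ⟪a • eVec m, b • eVec m⟫ = a * b := by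
  have h : ⟪eVec m, eVec m⟫ = (1:ℝ) := by
    rw [eVec, lp.inner_single_left]
    simp [eVec, lp.single_apply_self]
  rw [real_inner_smul_left, real_inner_smul_right, h]; ring

lemma hasD1 (c : ℝ) (m : ℕ) (t : ℝ) :
    HasDerivAt (fun s : ℝ => (c * (1/2 - s^2/2)) • eVec m) ((-(c*t)) • eVec m) t := by
  have h : HasDerivAt (fun s : ℝ => c * (1/2 - s^2/2)) (-(c*t)) t := by
    have h2 := ((hasDerivAt_pow 2 t).div_const 2).const_sub (1/2)
    have := h2.const_mul c
    exact this.congr_deriv (by push_cast; ring)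
  exact h.smul_const _

lemma hasD2 (c : ℝ) (m : ℕ) (t : ℝ) :
    HasDerivAt (fun s : ℝ => (c * (s - 1)) • eVec m) (c • eVec m) t := by
  have h : HasDerivAt (fun s : ℝ => c * (s - 1)) c t := by
    have := ((hasDerivAt_id t).sub_const 1).const_mul c
    simpa using this
  exact h.smul_const _

lemma hasD3 (c : ℝ) (t : ℝ) :
    HasDerivAt (fun s : ℝ => c^2 * (1/6 + s^3/6 - s^2/2 + s/2))
      (c^2 * (t^2/2 - t + 1/2)) t := by
  have h : HasDerivAt (fun s : ℝ => 1/6 + s^3/6 - s^2/2 + s/2)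
      ((3 * t^2)/6 - (2*t)/2 + 1/2) t := by
    have h3 := ((hasDerivAt_pow 3 t).div_const 6).const_add (1/6)
    have h2 := (hasDerivAt_pow 2 t).div_const 2
    have hid := (hasDerivAt_id t).div_const 2
    have := (h3.sub h2).add hid
    exact this.congr_deriv (by push_cast; ring)
  have := h.const_mul (c^2)
  exact this.congr_deriv (by ring)

/-- The curve `αⁿ(t) = (c(1/2−t²/2)eₙ, c(t−1)eₙ, c²(1/6+t³/6−t²/2+t/2))` is smooth,
horizontal, joins `((c/2)eₙ, −c eₙ, c²/6)` to `(0,0,c²/3)`, and its `g`-length is at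
most `√2 c/√n → 0`. -/
theorem statement13 (c : ℝ) (hc : 0 < c) (n : ℕ) (hn : 1 ≤ n)
    (α : ℝ → Hei)
    (hα : α = fun t => ((c * (1/2 - t^2/2)) • eVec (n - 1), (c * (t - 1)) • eVec (n - 1),
      c^2 * (1/6 + t^3/6 - t^2/2 + t/2))) :
    ContDiff ℝ (⊤ : ℕ∞) α ∧ Horizontal α ∧
    α 0 = (((c / 2) • eVec (n - 1), (-c) • eVec (n - 1), c^2 / 6) : Hei) ∧
    α 1 = ((0, 0, c^2 / 3) : Hei) ∧
    (∀ t : ℝ, etaSq (deriv (fun s => (α s).1) t) = t^2 * c^2 / n ∧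
      etaSq (deriv (fun s => (α s).2.1) t) = c^2 / n) ∧
    lenG α ≤ Real.sqrt 2 * c / Real.sqrt n ∧
    Filter.Tendsto (fun m : ℕ => Real.sqrt 2 * c / Real.sqrt m) Filter.atTop (nhds 0) := by
  subst hα
  set m := n - 1 with hmdef
  have hmn : ((m : ℝ) + 1) = (n : ℝ) := by
    rw [hmdef]
    have : n - 1 + 1 = n := Nat.sub_add_cancel hn
    exact_mod_cast congrArg (Nat.cast (R := ℝ)) this
  have hnpos : (0:ℝ) < (n:ℝ) := by exact_mod_cast hn
  have hd1 : ∀ t : ℝ, deriv (fun s : ℝ => (c * (1/2 - s^2/2)) • eVec m) t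
      = (-(c*t)) • eVec m := fun t => (hasD1 c m t).deriv
  have hd2 : ∀ t : ℝ, deriv (fun s : ℝ => (c * (s - 1)) • eVec m) t
      = c • eVec m := fun t => (hasD2 c m t).deriv
  have hkey : ∀ t : ℝ,
      etaSq (deriv (fun s : ℝ => (c * (1/2 - s^2/2)) • eVec m) t) = t^2 * c^2 / n ∧
      etaSq (deriv (fun s : ℝ => (c * (s - 1)) • eVec m) t) = c^2 / n := by
    intro t
    rw [hd1, hd2, etaSq_smul_eVec, etaSq_smul_eVec, hmn]
    constructor <;> ring_nf
  refine ⟨?_, ?_, ?_, ?_, hkey, ?_, ?_⟩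
  · -- smoothness
    refine ContDiff.prodMk ?_ (ContDiff.prodMk ?_ ?_)
    · exact (contDiff_const.mul (contDiff_const.sub ((contDiff_id.pow 2).div_const 2))).smul
        contDiff_const
    · exact (contDiff_const.mul (contDiff_id.sub contDiff_const)).smul contDiff_const
    · exact contDiff_const.mul
        (((contDiff_const.add ((contDiff_id.pow 3).div_const 6)).sub
          ((contDiff_id.pow 2).div_const 2)).add (contDiff_id.div_const 2))
  · -- horizontality
    intro t _ _
    show deriv (fun s : ℝ => c^2 * (1/6 + s^3/6 - s^2/2 + s/2)) t = _
    rw [(hasD3 c t).deriv, hd1, hd2, inner_smul_eVec, inner_smul_eVec]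
    ring
  · -- α 0
    show (_, _, _) = (_, _, _)
    norm_num
    constructor
    · congr 1; ring
    · congr 1; ring
  · -- α 1
    show (_, _, _) = (_, _, _)
    norm_num
    ring
  · -- length bound
    have hC : Real.sqrt (c^2/n + c^2/n) = Real.sqrt 2 * c / Real.sqrt n := by
      rw [show c^2/(n:ℝ) + c^2/n = 2*c^2/n by ring, Real.sqrt_div (by positivity),
        Real.sqrt_mul (by norm_num), Real.sqrt_sq hc.le]
    have heq : lenG (fun t : ℝ => ((c * (1/2 - t^2/2)) • eVec m, (c * (t - 1)) • eVec m,
        c^2 * (1/6 + t^3/6 - t^2/2 + t/2))) = ∫ t in (0:ℝ)..1, Real.sqrt (t^2*c^2/n + c^2/n) := by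
      unfold lenG
      apply intervalIntegral.integral_congr
      intro t _
      show Real.sqrt (etaSq (deriv (fun s : ℝ => (c * (1/2 - s^2/2)) • eVec m) t)
        + etaSq (deriv (fun s : ℝ => (c * (s - 1)) • eVec m) t)) = _
      rw [(hkey t).1, (hkey t).2]
    rw [heq, ← hC]
    have hcont : Continuous fun t : ℝ => Real.sqrt (t^2*c^2/n + c^2/n) := by
      apply Real.continuous_sqrt.comp
      continuity
    calc (∫ t in (0:ℝ)..1, Real.sqrt (t^2*c^2/n + c^2/n))
        ≤ ∫ _ in (0:ℝ)..1, Real.sqrt (c^2/n + c^2/n) := by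
          apply intervalIntegral.integral_mono_on zero_le_one
            (hcont.intervalIntegrable _ _) (intervalIntegrable_const)
          intro t ht
          apply Real.sqrt_le_sqrt
          have h1 : t^2 ≤ 1 := by nlinarith [ht.1, ht.2]
          have : t^2*c^2/n ≤ c^2/n := by
            apply div_le_div_of_nonneg_right ?_ hnpos.le
            nlinarith [sq_nonneg c]
          linarith
      _ = Real.sqrt (c^2/n + c^2/n) := by simp
  · -- tendsto
    have h1 : Filter.Tendsto (fun x : ℝ => x ^ (-(1/2) : ℝ)) Filter.atTop (nhds 0) :=
      tendsto_rpow_neg_atTop (by norm_num)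
    have h2 := (h1.comp tendsto_natCast_atTop_atTop).const_mul (Real.sqrt 2 * c)
    rw [mul_zero] at h2
    have hfe : (fun k : ℕ => Real.sqrt 2 * c / Real.sqrt k)
        = fun k : ℕ => Real.sqrt 2 * c * (((fun x : ℝ => x ^ (-(1/2) : ℝ)) ∘ Nat.cast) k) := by
      funext k
      rw [Function.comp_apply, Real.rpow_neg (Nat.cast_nonneg k), ← Real.sqrt_eq_rpow,
        div_eq_mul_inv]
    rw [hfe]
    exact h2

end
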